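/- Let g be a probability distribution on [0, ∞) with P(σ² > 0) > 0, let θ > 0 and α ∈ (0,1) with Φ(θ) = 1 − α. If z satisfies E_{σ²∼g}[Φ(θ√(σ²+1) − zσ)] = 1 − α, then z < θ. -/
import Mathlib


open MeasureTheory ProbabilityTheory

/-- The standard normal CDF. -/
noncomputable def stdGaussianCDF (x : ℝ) : ℝ :=
  ((gaussianReal 0 1) (Set.Iic x)).toReal

lemma stdGaussianCDF_mono : Monotone stdGaussianCDF := by
  intro a b hab
  exact ENNReal.toReal_mono (measure_ne_top _ _)
    (measure_mono (Set.Iic_subset_Iic.mpr hab))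

lemma stdGaussianCDF_strictMono : StrictMono stdGaussianCDF := by
  intro a b hab
  have hdisj : Disjoint (Set.Iic a) (Set.Ioc a b) := Set.Iic_disjoint_Ioc le_rfl
  have hunion : Set.Iic a ∪ Set.Ioc a b = Set.Iic b := Set.Iic_union_Ioc_eq_Iic hab.le
  have hmeas : (gaussianReal 0 1) (Set.Iic b)
      = (gaussianReal 0 1) (Set.Iic a) + (gaussianReal 0 1) (Set.Ioc a b) := by
    rw [← hunion, measure_union hdisj measurableSet_Ioc]
  have hpos : 0 < (gaussianReal 0 1) (Set.Ioc a b) := by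
    rw [pos_iff_ne_zero]
    intro h0
    have := (gaussianReal_absolutelyContinuous' 0 one_ne_zero) h0
    rw [Real.volume_Ioc] at this
    simp only [ENNReal.ofReal_eq_zero, sub_nonpos] at this
    exact absurd this (not_le.mpr hab)
  unfold stdGaussianCDF
  rw [hmeas]
  rw [ENNReal.toReal_add (measure_ne_top _ _) (measure_ne_top _ _)]
  have := ENNReal.toReal_pos hpos.ne' (measure_ne_top _ _)
  linarith

lemma stdGaussianCDF_nonneg (x : ℝ) : 0 ≤ stdGaussianCDF x := ENNReal.toReal_nonneg

lemma stdGaussianCDF_le_one (x : ℝ) : stdGaussianCDF x ≤ 1 := by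
  unfold stdGaussianCDF
  rw [← ENNReal.toReal_one]
  exact ENNReal.toReal_mono (by simp) prob_le_one

lemma stdGaussianCDF_measurable : Measurable stdGaussianCDF :=
  stdGaussianCDF_mono.measurable

/-- If g is a probability distribution on [0,∞) with g({s > 0}) > 0, θ > 0,
α ∈ (0,1) with Φ(θ) = 1 − α, and z satisfies
E_{s∼g}[Φ(θ√(s+1) − z√s)] = 1 − α, then z < θ. -/
theorem z_lt_theta (g : Measure ℝ) [IsProbabilityMeasure g]
    (hg : ∀ᵐ s ∂g, 0 ≤ s) (hgpos : 0 < g {s : ℝ | 0 < s})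
    (θ α z : ℝ) (hθ : 0 < θ) (hα : α ∈ Set.Ioo (0:ℝ) 1)
    (hΦθ : stdGaussianCDF θ = 1 - α)
    (hz : ∫ s, stdGaussianCDF (θ * Real.sqrt (s + 1) - z * Real.sqrt s) ∂g = 1 - α) :
    z < θ := by
  by_contra hle
  push_neg at hle
  set f : ℝ → ℝ := fun s => stdGaussianCDF (θ * Real.sqrt (s + 1) - z * Real.sqrt s) with hf
  have hfmeas : Measurable f := by
    apply stdGaussianCDF_measurable.comp
    fun_prop
  have hfint : Integrable f g := by
    refine ⟨hfmeas.aestronglyMeasurable, ?_⟩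
    apply HasFiniteIntegral.mono' (integrable_const (1:ℝ)).hasFiniteIntegral
    filter_upwards with s
    rw [Real.norm_eq_abs, abs_of_nonneg (stdGaussianCDF_nonneg _)]
    exact stdGaussianCDF_le_one _
  -- pointwise bounds
  have sqrt_lt : ∀ s : ℝ, 0 < s → Real.sqrt (s + 1) < Real.sqrt s + 1 := by
    intro s hs
    have ha := Real.sqrt_nonneg s
    have hb := Real.sqrt_nonneg (s + 1)
    have ha2 := Real.sq_sqrt hs.le
    have hb2 := Real.sq_sqrt (by linarith : (0:ℝ) ≤ s + 1)
    have hapos : 0 < Real.sqrt s := Real.sqrt_pos.mpr hs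
    nlinarith [sq_nonneg (Real.sqrt (s+1) - Real.sqrt s - 1)]
  have sqrt_le : ∀ s : ℝ, 0 ≤ s → Real.sqrt (s + 1) ≤ Real.sqrt s + 1 := by
    intro s hs
    rcases eq_or_lt_of_le hs with h | h
    · simp [← h]
    · exact (sqrt_lt s h).le
  have key : ∀ s : ℝ, 0 ≤ s → θ * Real.sqrt (s + 1) - z * Real.sqrt s ≤ θ := by
    intro s hs
    have h1 := sqrt_le s hs
    have ha := Real.sqrt_nonneg s
    nlinarith
  have keystrict : ∀ s : ℝ, 0 < s → θ * Real.sqrt (s + 1) - z * Real.sqrt s < θ := by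
    intro s hs
    have h1 := sqrt_lt s hs
    have ha := Real.sqrt_nonneg s
    nlinarith
  have hbound : f ≤ᵐ[g] fun _ => 1 - α := by
    filter_upwards [hg] with s hs
    rw [← hΦθ]
    exact stdGaussianCDF_mono (key s hs)
  have hconst : ∫ s, (fun _ => 1 - α : ℝ → ℝ) s ∂g = 1 - α := by
    simp
  have heq : f =ᵐ[g] fun _ => 1 - α := by
    rw [← integral_eq_iff_of_ae_le hfint (integrable_const _) hbound]
    rw [hz, hconst]
  have hsub : {s : ℝ | 0 < s} ⊆ {s : ℝ | ¬ f s = 1 - α} := by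
    intro s hs
    have := keystrict s hs
    have hlt : f s < 1 - α := by
      rw [← hΦθ]
      exact stdGaussianCDF_strictMono this
    exact hlt.ne
  have : g {s : ℝ | 0 < s} = 0 :=
    measure_mono_null hsub heq
  exact absurd this hgpos.ne'
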